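/- arXiv:1311.2618 — 2 statements merged into one kernel-verified Lean document; each statement's English description precedes it below -/
import Mathlib

section
/- If H is a vertex-minor of G, then the linear rank-width of H is at most the linear rank-width of G. -/
/-!
Over GF(2), local complementation at `v` adds the rank-one matrix `a aᵀ` (with `a` the indicator
of `N(v)`) to the adjacency matrix off the diagonal. On the cut matrix of `X` one factor of this
update is the row (if `v ∈ X`) or column (if `v ∉ X`) of `v`, so the cut-rank does not grow.
Vertex deletion and isomorphism only pass to submatrices of cut matrices. Finally, an optimal
layout of `G` restricts to a layout of the minor whose initial segments are preimages of initial
segments of the original layout.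
-/

/-- Local complementation at a vertex `v`. -/
def localComp {V : Type} (G : SimpleGraph V) (v : V) : SimpleGraph V where
  Adj x y := x ≠ y ∧ Xor' (G.Adj x y) (G.Adj v x ∧ G.Adj v y)
  symm := by
    refine ⟨?_⟩
    rintro x y ⟨hne, h⟩
    exact ⟨hne.symm, by rwa [G.adj_comm y x, and_comm]⟩
  loopless := by refine ⟨?_⟩; rintro x ⟨hne, -⟩; exact hne rfl

/-- The cut-rank of `X`: the rank over GF(2) of the adjacency submatrix
`A(G)[X, V \\ X]`. -/
noncomputable def cutRank {V : Type} [Fintype V] [DecidableEq V]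
    (G : SimpleGraph V) (X : Finset V) : ℕ := by
  classical
  exact Matrix.rank (Matrix.of fun (i : X) (j : (Xᶜ : Finset V)) =>
    if G.Adj (i : V) (j : V) then (1 : ZMod 2) else 0)

/-- A linear layout is an ordering of all vertices. -/
def IsLinearLayout {V : Type} (l : List V) : Prop := l.Nodup ∧ ∀ v : V, v ∈ l

/-- The width of a linear layout: the maximum cut-rank of an initial segment. -/
noncomputable def layoutWidth {V : Type} [Fintype V] [DecidableEq V]
    (G : SimpleGraph V) (l : List V) : ℕ :=
  (Finset.range l.length).sup fun i => cutRank G (l.take (i+1)).toFinset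

/-- The linear rank-width of a graph. -/
noncomputable def linRankWidth {V : Type} [Fintype V] [DecidableEq V]
    (G : SimpleGraph V) : ℕ :=
  sInf {k | ∃ l : List V, IsLinearLayout l ∧ layoutWidth G l = k}

/-- Deletion of the vertex `v`. -/
def deleteVertex {V : Type} (G : SimpleGraph V) (v : V) : SimpleGraph {u : V // u ≠ v} :=
  G.induce {u : V | u ≠ v}

/-- `IsVertexMinor H G`: `H` is obtained from `G` by a sequence of local
complementations and vertex deletions (up to isomorphism). -/
inductive IsVertexMinor : {W : Type} → SimpleGraph W → {V : Type} → SimpleGraph V → Prop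
  | of_iso {V W : Type} {G : SimpleGraph V} {H : SimpleGraph W}
      (e : Nonempty (H ≃g G)) : IsVertexMinor H G
  | localComp {V W : Type} {G : SimpleGraph V} {H : SimpleGraph W} (v : V)
      (h : IsVertexMinor H (localComp G v)) : IsVertexMinor H G
  | delete {V W : Type} {G : SimpleGraph V} {H : SimpleGraph W} (v : V)
      (h : IsVertexMinor H (deleteVertex G v)) : IsVertexMinor H G

namespace Matrix

variable {m n R : Type} [Fintype n] [CommSemiring R] [StrongRankCondition R]

theorem rank_add_vecMulVec_row_le [Fintype m] [DecidableEq m] (A : Matrix m n R) (c : m → R)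
    (i : m) :
    (A + vecMulVec c (A.row i)).rank ≤ A.rank := by
  have h : A + vecMulVec c (A.row i) = (1 + vecMulVec c (Pi.single i 1)) * A := by
    rw [Matrix.add_mul, Matrix.one_mul, vecMulVec_mul, single_one_vecMul]
  rw [h]
  exact rank_mul_le_right _ _

theorem rank_add_vecMulVec_col_le [DecidableEq n] (A : Matrix m n R) (j : n) (r : n → R) :
    (A + vecMulVec (A.col j) r).rank ≤ A.rank := by
  have h : A + vecMulVec (A.col j) r = A * (1 + vecMulVec (Pi.single j 1) r) := by
    rw [Matrix.mul_add, Matrix.mul_one, mul_vecMulVec, mulVec_single_one]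
  rw [h]
  exact rank_mul_le_left _ _

end Matrix

open Matrix SimpleGraph

theorem localComp_adj {V : Type} (G : SimpleGraph V) (v : V) {x y : V} (hxy : x ≠ y) :
    (localComp G v).Adj x y ↔ Xor (G.Adj x y) (G.Adj x v ∧ G.Adj v y) := by
  simp only [localComp, hxy, ne_eq, not_false_eq_true, true_and, G.adj_comm x v]
  rfl

theorem adjMatrix_localComp_apply {V α : Type} [NonAssocSemiring α] [CharP α 2]
    (G : SimpleGraph V) [DecidableRel G.Adj] (v : V) [DecidableRel (localComp G v).Adj]
    {x y : V} (hxy : x ≠ y) :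
    (localComp G v).adjMatrix α x y =
      G.adjMatrix α x y + G.adjMatrix α x v * G.adjMatrix α v y := by
  have h := localComp_adj G v hxy
  simp only [adjMatrix_apply]
  split_ifs <;> simp_all [Xor, one_add_one_eq_two, CharTwo.two_eq_zero]

section CutRank

variable {V W : Type} [Fintype V] [DecidableEq V] [Fintype W] [DecidableEq W]

theorem cutRank_eq_rank_submatrix (G : SimpleGraph V) [DecidableRel G.Adj] (X : Finset V) :
    cutRank G X = ((G.adjMatrix (ZMod 2)).submatrix ((↑) : X → V) ((↑) : ↥Xᶜ → V)).rank := by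
  unfold cutRank
  congr 1
  ext i j
  simp only [of_apply, submatrix_apply, adjMatrix_apply]
  congr

theorem cutRank_empty (G : SimpleGraph V) : cutRank G ∅ = 0 := by
  classical
  rw [cutRank_eq_rank_submatrix]
  exact Nat.le_zero.mp ((rank_le_card_height _).trans_eq (by simp))

theorem cutRank_preimage_le {G : SimpleGraph V} {H : SimpleGraph W} (f : H ↪g G) (X : Finset V) :
    cutRank H (X.preimage f f.injective.injOn) ≤ cutRank G X := by
  classical
  rw [cutRank_eq_rank_submatrix, cutRank_eq_rank_submatrix, ← f.submatrix_adjMatrix (ZMod 2)]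
  let r (y : ↥(X.preimage f f.injective.injOn)) : X := ⟨f y, Finset.mem_preimage.mp y.2⟩
  let c (y : ↥(X.preimage f f.injective.injOn)ᶜ) : ↥Xᶜ :=
    ⟨f y, Finset.mem_compl.mpr fun hy => Finset.mem_compl.mp y.2 (Finset.mem_preimage.mpr hy)⟩
  have h : ((G.adjMatrix (ZMod 2)).submatrix f f).submatrix ((↑) : _ → W) ((↑) : _ → W) =
      ((G.adjMatrix (ZMod 2)).submatrix ((↑) : X → V) ((↑) : ↥Xᶜ → V)).submatrix r c := by
    ext; rfl
  rw [h]
  exact rank_submatrix_le _ r c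

theorem cutRank_localComp_le (G : SimpleGraph V) (v : V) (X : Finset V) :
    cutRank (localComp G v) X ≤ cutRank G X := by
  classical
  set A := G.adjMatrix (ZMod 2)
  have hsplit : ((localComp G v).adjMatrix (ZMod 2)).submatrix ((↑) : X → V) ((↑) : ↥Xᶜ → V) =
      A.submatrix (↑) (↑) + vecMulVec (fun i : X => A i v) (fun j : ↥Xᶜ => A v j) := by
    ext i j
    exact adjMatrix_localComp_apply G v fun hij => Finset.mem_compl.mp j.2 (hij ▸ i.2)
  rw [cutRank_eq_rank_submatrix, cutRank_eq_rank_submatrix, hsplit]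
  by_cases hv : v ∈ X
  · have hrow : (fun j : ↥Xᶜ => A v j) =
        (A.submatrix ((↑) : X → V) ((↑) : ↥Xᶜ → V)).row ⟨v, hv⟩ := rfl
    rw [hrow]
    exact rank_add_vecMulVec_row_le _ _ _
  · have hcol : (fun i : X => A i v) =
        (A.submatrix ((↑) : X → V) ((↑) : ↥Xᶜ → V)).col ⟨v, Finset.mem_compl.mpr hv⟩ := rfl
    rw [hcol]
    exact rank_add_vecMulVec_col_le _ _ _

end CutRank

theorem List.mem_filterMap_partialInv {α β : Type} {f : α → β} (hf : Function.Injective f)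
    (l : List β) (a : α) : a ∈ l.filterMap (Function.partialInv f) ↔ f a ∈ l := by
  simp [List.mem_filterMap, hf.isPartialInv a]

theorem List.toFinset_filterMap_partialInv {α β : Type} [DecidableEq α] [DecidableEq β]
    {f : α → β} (hf : Function.Injective f) (l : List β) :
    (l.filterMap (Function.partialInv f)).toFinset = l.toFinset.preimage f hf.injOn := by
  ext a
  simp [List.mem_filterMap_partialInv hf]

theorem IsLinearLayout.filterMap_partialInv {α β : Type} {f : α → β} (hf : Function.Injective f)
    {l : List β} (hl : IsLinearLayout l) :
    IsLinearLayout (l.filterMap (Function.partialInv f)) := by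
  refine ⟨hl.1.filterMap fun b b' a hb hb' => ?_, fun a => ?_⟩
  · exact ((hf.isPartialInv a b).mp hb).symm.trans ((hf.isPartialInv a b').mp hb')
  · exact (List.mem_filterMap_partialInv hf l a).mpr (hl.2 (f a))

section Layout

variable {V W : Type} [Fintype V] [DecidableEq V] [Fintype W] [DecidableEq W]

theorem exists_isLinearLayout_layoutWidth_eq (G : SimpleGraph V) :
    ∃ l, IsLinearLayout l ∧ layoutWidth G l = linRankWidth G := by
  have hne : {k | ∃ l, IsLinearLayout l ∧ layoutWidth G l = k}.Nonempty :=
    ⟨_, Finset.univ.toList, ⟨Finset.nodup_toList _, by simp⟩, rfl⟩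
  exact Nat.sInf_mem hne

theorem linRankWidth_le_layoutWidth (G : SimpleGraph V) {l : List V} (hl : IsLinearLayout l) :
    linRankWidth G ≤ layoutWidth G l :=
  Nat.sInf_le ⟨l, hl, rfl⟩

theorem cutRank_le_layoutWidth (G : SimpleGraph V) {p l : List V} (hp : p <+: l) :
    cutRank G p.toFinset ≤ layoutWidth G l := by
  cases hlen : p.length with
  | zero => simp [List.length_eq_zero_iff.mp hlen, cutRank_empty]
  | succ i =>
    rw [List.prefix_iff_eq_take.mp hp, hlen]
    have hi : i < l.length := by have := hp.length_le; omega
    exact Finset.le_sup (f := fun i => cutRank G (l.take (i + 1)).toFinset)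
      (Finset.mem_range.mpr hi)

theorem linRankWidth_le_of_cutRank_le {G : SimpleGraph V} {H : SimpleGraph W} (f : W ↪ V)
    (h : ∀ X : Finset V, cutRank H (X.preimage f f.injective.injOn) ≤ cutRank G X) :
    linRankWidth H ≤ linRankWidth G := by
  obtain ⟨l, hl, hw⟩ := exists_isLinearLayout_layoutWidth_eq G
  set l' := l.filterMap (Function.partialInv f)
  have hwidth : layoutWidth H l' ≤ layoutWidth G l := by
    refine Finset.sup_le fun i _ => ?_
    obtain ⟨p, hp, hpl⟩ := List.prefix_filterMap_iff.mp (l'.take_prefix (i + 1))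
    rw [hpl, List.toFinset_filterMap_partialInv f.injective]
    exact (h _).trans (cutRank_le_layoutWidth G hp)
  calc linRankWidth H ≤ layoutWidth H l' :=
        linRankWidth_le_layoutWidth H (hl.filterMap_partialInv f.injective)
    _ ≤ layoutWidth G l := hwidth
    _ = linRankWidth G := hw

theorem linRankWidth_le_of_embedding {G : SimpleGraph V} {H : SimpleGraph W} (f : H ↪g G) :
    linRankWidth H ≤ linRankWidth G :=
  linRankWidth_le_of_cutRank_le f.toEmbedding (cutRank_preimage_le f)

theorem linRankWidth_localComp_le (G : SimpleGraph V) (v : V) :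
    linRankWidth (localComp G v) ≤ linRankWidth G :=
  linRankWidth_le_of_cutRank_le (.refl V) fun X => by
    convert cutRank_localComp_le G v X
    ext
    simp

end Layout

theorem linRankWidth_le_of_isVertexMinor {V W : Type}
    [Fintype V] [DecidableEq V] [Fintype W] [DecidableEq W]
    (G : SimpleGraph V) (H : SimpleGraph W) (h : IsVertexMinor H G) :
    linRankWidth H ≤ linRankWidth G := by
  revert ‹Fintype V› ‹DecidableEq V› ‹Fintype W› ‹DecidableEq W›
  induction h with
  | of_iso e => intros; exact linRankWidth_le_of_embedding e.some.toEmbedding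
  | localComp v _ ih => intros; exact ih.trans (linRankWidth_localComp_le _ v)
  | delete v _ ih =>
    intros
    exact ih.trans (linRankWidth_le_of_embedding (Embedding.induce _))
end

section
/- Every graph in Δ_k is a block graph in which every vertex has odd degree, every block is isomorphic to K_2 or K_3, and no vertex is simplicial of degree at least 2. -/
/-- The delta composition of three graphs: disjoint union plus a triangle
`v₁v₂v₃` with one vertex in each part. -/
def deltaComp {V₁ V₂ V₃ : Type} (G₁ : SimpleGraph V₁) (G₂ : SimpleGraph V₂)
    (G₃ : SimpleGraph V₃) (v₁ : V₁) (v₂ : V₂) (v₃ : V₃) :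
    SimpleGraph (V₁ ⊕ V₂ ⊕ V₃) where
  Adj x y := match x, y with
    | .inl a, .inl b => G₁.Adj a b
    | .inr (.inl a), .inr (.inl b) => G₂.Adj a b
    | .inr (.inr a), .inr (.inr b) => G₃.Adj a b
    | .inl a, .inr (.inl b) => a = v₁ ∧ b = v₂
    | .inr (.inl a), .inl b => a = v₂ ∧ b = v₁
    | .inl a, .inr (.inr b) => a = v₁ ∧ b = v₃
    | .inr (.inr a), .inl b => a = v₃ ∧ b = v₁
    | .inr (.inl a), .inr (.inr b) => a = v₂ ∧ b = v₃
    | .inr (.inr a), .inr (.inl b) => a = v₃ ∧ b = v₂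
  symm := by
    refine ⟨?_⟩
    rintro (a|a|a) (b|b|b) h
    · exact G₁.adj_symm h
    · exact ⟨h.2, h.1⟩
    · exact ⟨h.2, h.1⟩
    · exact ⟨h.2, h.1⟩
    · exact G₂.adj_symm h
    · exact ⟨h.2, h.1⟩
    · exact ⟨h.2, h.1⟩
    · exact ⟨h.2, h.1⟩
    · exact G₃.adj_symm h
  loopless := by refine ⟨?_⟩; rintro (a|a|a) h <;> exact (SimpleGraph.irrefl _) h

/-- `InDelta k G` means `G` belongs to the class `Δ_k` (up to isomorphism):
`Δ_0 = {K₂}` and `Δ_k` is the set of delta compositions of three graphs in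
`Δ_{k-1}`. -/
inductive InDelta : ℕ → {V : Type} → SimpleGraph V → Prop
  | base {V : Type} (G : SimpleGraph V)
      (e : Nonempty (G ≃g (⊤ : SimpleGraph (Fin 2)))) : InDelta 0 G
  | comp {k : ℕ} {V₁ V₂ V₃ V : Type} {G₁ : SimpleGraph V₁} {G₂ : SimpleGraph V₂}
      {G₃ : SimpleGraph V₃} (G : SimpleGraph V) (v₁ : V₁) (v₂ : V₂) (v₃ : V₃)
      (h₁ : InDelta k G₁) (h₂ : InDelta k G₂) (h₃ : InDelta k G₃)
      (e : Nonempty (G ≃g deltaComp G₁ G₂ G₃ v₁ v₂ v₃)) : InDelta (k+1) G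

/-- `S` induces a nonempty connected subgraph with no cut vertices. -/
def IsBiconnectedSet {V : Type} (G : SimpleGraph V) (S : Set V) : Prop :=
  S.Nonempty ∧ (G.induce S).Preconnected ∧ ∀ x : V, (G.induce (S \ {x})).Preconnected

/-- A block: a maximal set inducing a connected subgraph with no cut vertices. -/
def IsBlock {V : Type} (G : SimpleGraph V) (S : Set V) : Prop :=
  IsBiconnectedSet G S ∧ ∀ T : Set V, S ⊆ T → IsBiconnectedSet G T → S = T

/-- A block graph: every block is a complete graph. -/
def IsBlockGraph {V : Type} (G : SimpleGraph V) : Prop :=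
  ∀ S : Set V, IsBlock G S → ∀ x ∈ S, ∀ y ∈ S, x ≠ y → G.Adj x y

/-- A vertex is simplicial if its neighborhood is a clique. -/
def IsSimplicial {V : Type} (G : SimpleGraph V) (v : V) : Prop :=
  ∀ x y : V, G.Adj v x → G.Adj v y → x ≠ y → G.Adj x y

/-!
All four properties are carried along the recursion as one invariant: odd degrees, every block a
clique on two or three vertices, and every simplicial vertex of degree below two. In a delta
composition each root `vᵢ` is a cut vertex separating its part from the rest, so a biconnected set
lies inside one part or inside the new triangle; the blocks are therefore the blocks of the parts
together with the triangle. A root gains exactly two neighbours, keeping its degree odd, and stops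
being simplicial, because its (existing, as its degree is odd) neighbour inside its own part is
not adjacent to the other roots. Every other vertex keeps its neighbourhood.
-/

open SimpleGraph Set

section General

variable {V W : Type} {G : SimpleGraph V} {H : SimpleGraph W}

noncomputable def SimpleGraph.Embedding.induceImageIso (f : G ↪g H) (A : Set V) :
    G.induce A ≃g H.induce (f '' A) where
  toEquiv := Equiv.Set.image f A f.injective
  map_rel_iff' := f.map_rel_iff

lemma SimpleGraph.Iso.ncard_neighborSet (e : G ≃g H) (v : V) :
    (H.neighborSet (e v)).ncard = (G.neighborSet v).ncard := by
  rw [← Nat.card_coe_set_eq, ← Nat.card_coe_set_eq]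
  exact Nat.card_congr (e.mapNeighborSet v).symm

lemma SimpleGraph.IsClique.of_preimage (f : G ↪g H) {S : Set W} (hSf : S ⊆ range f)
    (h : G.IsClique (f ⁻¹' S)) : H.IsClique S := by
  rintro _ hx _ hy hxy
  obtain ⟨a, rfl⟩ := hSf hx
  obtain ⟨b, rfl⟩ := hSf hy
  exact f.map_adj_iff.mpr (h hx hy (ne_of_apply_ne f hxy))

lemma SimpleGraph.IsClique.nonempty_induce_iso_top {S : Set V} (h : G.IsClique S) {n : ℕ}
    (hS : S.ncard = n) (hn : n ≠ 0) : Nonempty (G.induce S ≃g (⊤ : SimpleGraph (Fin n))) := by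
  have : Finite S := finite_of_ncard_ne_zero (hS ▸ hn)
  rw [induce_eq_top.mpr h]
  exact ⟨Iso.completeGraph (Finite.equivFinOfCardEq (by rw [Nat.card_coe_set_eq, hS]))⟩

lemma IsSimplicial.of_embedding (f : G ↪g H) {v : V} (h : IsSimplicial H (f v)) :
    IsSimplicial G v := fun _ _ hx hy hxy =>
  f.map_adj_iff.mp (h _ _ (f.map_adj_iff.mpr hx) (f.map_adj_iff.mpr hy) (f.injective.ne hxy))

lemma SimpleGraph.IsClique.isBiconnectedSet {S : Set V} (h : G.IsClique S) (hne : S.Nonempty) :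
    IsBiconnectedSet G S := by
  refine ⟨hne, ?_, fun x => ?_⟩
  · rw [induce_eq_top.mpr h]
    exact preconnected_top
  · rw [induce_eq_top.mpr (h.subset sdiff_subset)]
    exact preconnected_top

lemma isBiconnectedSet_image_iff (f : G ↪g H) (A : Set V) :
    IsBiconnectedSet H (f '' A) ↔ IsBiconnectedSet G A := by
  have hdiff (a : V) : f '' A \ {f a} = f '' (A \ {a}) := by
    rw [image_sdiff f.injective, image_singleton]
  have hpre (B : Set V) := (f.induceImageIso B).preconnected_iff
  refine ⟨fun ⟨hne, hcon, hcut⟩ => ⟨hne.of_image, (hpre A).mpr hcon, fun a => ?_⟩,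
    fun ⟨hne, hcon, hcut⟩ => ⟨hne.image f, (hpre A).mp hcon, fun x => ?_⟩⟩
  · exact (hpre _).mpr (hdiff a ▸ hcut (f a))
  · by_cases hx : x ∈ range f
    · obtain ⟨a, rfl⟩ := hx
      exact hdiff a ▸ (hpre _).mp (hcut a)
    · rw [sdiff_singleton_eq_self fun hmem => hx (image_subset_range _ _ hmem)]
      exact (hpre A).mp hcon

lemma IsBlock.preimage (f : G ↪g H) {S : Set W} (hS : IsBlock H S) (hSf : S ⊆ range f) :
    IsBlock G (f ⁻¹' S) := by
  have himage : f '' (f ⁻¹' S) = S := image_preimage_eq_of_subset hSf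
  refine ⟨(isBiconnectedSet_image_iff f _).mp (by rw [himage]; exact hS.1), fun T hST hT => ?_⟩
  have hS_eq := hS.2 (f '' T) (himage ▸ image_mono hST) ((isBiconnectedSet_image_iff f T).mpr hT)
  rw [hS_eq, preimage_image_eq T f.injective]

lemma IsBiconnectedSet.subset_or_inter_subset_singleton {S R : Set W} {u : W}
    (hS : IsBiconnectedSet H S) (hR : ∀ x y, H.Adj x y → x ∈ R → y ∉ R → x = u) (hu : u ∈ R) :
    S ⊆ R ∨ S ∩ R ⊆ {u} := by
  refine or_iff_not_imp_left.mpr fun hSR => ?_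
  obtain ⟨y, hyS, hyR⟩ := not_subset.mp hSR
  rintro x ⟨hxS, hxR⟩
  by_contra hxu
  obtain ⟨p⟩ := hS.2.2 u ⟨x, hxS, hxu⟩ ⟨y, hyS, fun hyu => hyR (hyu ▸ hu)⟩
  obtain ⟨d, -, hd₁, hd₂⟩ := p.exists_boundary_dart {z | z.1 ∈ R} hxR hyR
  exact d.fst.2.2 (hR _ _ d.adj hd₁ hd₂)

end General

def IsEdgeOrTriangle {V : Type} (G : SimpleGraph V) (S : Set V) : Prop :=
  G.IsClique S ∧ (S.ncard = 2 ∨ S.ncard = 3)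

-- Degrees are `ncard`s so that no finiteness instances travel through the construction; an odd
-- `ncard` forces the neighbourhood to be finite.
structure IsDeltaLike {V : Type} (G : SimpleGraph V) : Prop where
  odd_ncard_neighborSet (v : V) : Odd (G.neighborSet v).ncard
  isEdgeOrTriangle_of_isBlock {S : Set V} : IsBlock G S → IsEdgeOrTriangle G S
  ncard_neighborSet_lt_two {v : V} : IsSimplicial G v → (G.neighborSet v).ncard < 2

namespace IsDeltaLike

variable {V W : Type} {G : SimpleGraph V} {H : SimpleGraph W}

lemma isEdgeOrTriangle_of_subset_range (hG : IsDeltaLike G) (f : G ↪g H) {S : Set W}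
    (hS : IsBlock H S) (hSf : S ⊆ range f) : IsEdgeOrTriangle H S := by
  obtain ⟨hclique, hcard⟩ := hG.isEdgeOrTriangle_of_isBlock (hS.preimage f hSf)
  rw [ncard_preimage_of_injective_subset_range f.injective hSf] at hcard
  exact ⟨hclique.of_preimage f hSf, hcard⟩

lemma of_iso (hG : IsDeltaLike G) (e : G ≃g H) : IsDeltaLike H where
  odd_ncard_neighborSet w := by
    rw [← e.apply_symm_apply w, e.ncard_neighborSet]
    exact hG.odd_ncard_neighborSet _
  isEdgeOrTriangle_of_isBlock hS :=
    hG.isEdgeOrTriangle_of_subset_range e.toEmbedding hS fun w _ => ⟨e.symm w, e.apply_symm_apply w⟩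
  ncard_neighborSet_lt_two {w} hw := by
    rw [← e.apply_symm_apply w] at hw ⊢
    rw [e.ncard_neighborSet]
    exact hG.ncard_neighborSet_lt_two (hw.of_embedding e.toEmbedding)

lemma top_fin_two : IsDeltaLike (⊤ : SimpleGraph (Fin 2)) := by
  have hdeg (v : Fin 2) : ((⊤ : SimpleGraph (Fin 2)).neighborSet v).ncard = 1 := by
    rw [ncard_eq_one]
    exact ⟨v + 1, by ext x; fin_cases v <;> fin_cases x <;> simp⟩
  refine ⟨fun v => hdeg v ▸ odd_one, fun {S} hS => ?_, fun {v} _ => by rw [hdeg]; omega⟩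
  rw [hS.2 univ (subset_univ S) ((IsClique.top univ).isBiconnectedSet univ_nonempty)]
  exact ⟨IsClique.top _, Or.inl (by simp)⟩

end IsDeltaLike

namespace deltaComp

variable {V₁ V₂ V₃ : Type} {G₁ : SimpleGraph V₁} {G₂ : SimpleGraph V₂} {G₃ : SimpleGraph V₃}
  {v₁ : V₁} {v₂ : V₂} {v₃ : V₃}

local notation "D" => deltaComp G₁ G₂ G₃ v₁ v₂ v₃

def embLeft : G₁ ↪g D where
  toFun := .inl
  inj' := Sum.inl_injective
  map_rel_iff' := .rfl

def embMid : G₂ ↪g D where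
  toFun b := .inr (.inl b)
  inj' := Sum.inr_injective.comp Sum.inl_injective
  map_rel_iff' := .rfl

def embRight : G₃ ↪g D where
  toFun c := .inr (.inr c)
  inj' := Sum.inr_injective.comp Sum.inr_injective
  map_rel_iff' := .rfl

def rotate : D ≃g deltaComp G₂ G₃ G₁ v₂ v₃ v₁ where
  toFun
    | .inl a => .inr (.inr a)
    | .inr (.inl b) => .inl b
    | .inr (.inr c) => .inr (.inl c)
  invFun
    | .inl b => .inr (.inl b)
    | .inr (.inl c) => .inr (.inr c)
    | .inr (.inr a) => .inl a
  left_inv := by rintro (a | b | c) <;> rfl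
  right_inv := by rintro (b | c | a) <;> rfl
  map_rel_iff' := by rintro (a | a | a) (b | b | b) <;> exact .rfl

lemma eq_of_adj_left {x y : V₁ ⊕ V₂ ⊕ V₃} (h : (D).Adj x y)
    (hx : x ∈ range (embLeft : G₁ ↪g D)) (hy : y ∉ range (embLeft : G₁ ↪g D)) : x = .inl v₁ := by
  obtain ⟨a, rfl⟩ := hx
  rcases y with b | b | b
  · exact absurd ⟨b, rfl⟩ hy
  · exact congrArg _ h.1
  · exact congrArg _ h.1

lemma eq_of_adj_mid {x y : V₁ ⊕ V₂ ⊕ V₃} (h : (D).Adj x y)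
    (hx : x ∈ range (embMid : G₂ ↪g D)) (hy : y ∉ range (embMid : G₂ ↪g D)) :
    x = .inr (.inl v₂) := by
  obtain ⟨a, rfl⟩ := hx
  rcases y with b | b | b
  · exact congrArg (Sum.inr ∘ Sum.inl) h.1
  · exact absurd ⟨b, rfl⟩ hy
  · exact congrArg (Sum.inr ∘ Sum.inl) h.1

lemma eq_of_adj_right {x y : V₁ ⊕ V₂ ⊕ V₃} (h : (D).Adj x y)
    (hx : x ∈ range (embRight : G₃ ↪g D)) (hy : y ∉ range (embRight : G₃ ↪g D)) :
    x = .inr (.inr v₃) := by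
  obtain ⟨a, rfl⟩ := hx
  rcases y with b | b | b
  · exact congrArg (Sum.inr ∘ Sum.inr) h.1
  · exact congrArg (Sum.inr ∘ Sum.inr) h.1
  · exact absurd ⟨b, rfl⟩ hy

abbrev triangle (v₁ : V₁) (v₂ : V₂) (v₃ : V₃) : Set (V₁ ⊕ V₂ ⊕ V₃) :=
  {.inl v₁, .inr (.inl v₂), .inr (.inr v₃)}

lemma isClique_triangle : (D).IsClique (triangle v₁ v₂ v₃) := by
  rintro x (rfl | rfl | rfl) y (rfl | rfl | rfl) hne <;>
    first | exact absurd rfl hne | exact ⟨rfl, rfl⟩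

lemma subset_part_or_subset_triangle {S : Set (V₁ ⊕ V₂ ⊕ V₃)} (hS : IsBiconnectedSet D S) :
    S ⊆ range (embLeft : G₁ ↪g D) ∨ S ⊆ range (embMid : G₂ ↪g D) ∨
      S ⊆ range (embRight : G₃ ↪g D) ∨ S ⊆ triangle v₁ v₂ v₃ := by
  rcases hS.subset_or_inter_subset_singleton (fun _ _ => eq_of_adj_left) ⟨v₁, rfl⟩ with h₁ | h₁
  · exact .inl h₁
  rcases hS.subset_or_inter_subset_singleton (fun _ _ => eq_of_adj_mid) ⟨v₂, rfl⟩ with h₂ | h₂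
  · exact .inr (.inl h₂)
  rcases hS.subset_or_inter_subset_singleton (fun _ _ => eq_of_adj_right) ⟨v₃, rfl⟩ with h₃ | h₃
  · exact .inr (.inr (.inl h₃))
  refine .inr (.inr (.inr ?_))
  rintro (a | b | c) hx
  · exact .inl (h₁ ⟨hx, a, rfl⟩)
  · exact .inr (.inl (h₂ ⟨hx, b, rfl⟩))
  · exact .inr (.inr (h₃ ⟨hx, c, rfl⟩))

lemma neighborSet_inl_of_ne {a : V₁} (ha : a ≠ v₁) :
    (D).neighborSet (.inl a) = .inl '' G₁.neighborSet a := by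
  ext (b | b | b) <;> simp [deltaComp, ha]

lemma neighborSet_inl_root :
    (D).neighborSet (.inl v₁) =
      insert (.inr (.inl v₂)) (insert (.inr (.inr v₃)) (.inl '' G₁.neighborSet v₁)) := by
  ext (b | b | b) <;> simp [deltaComp, eq_comm]

lemma odd_ncard_neighborSet_inl (hG₁ : IsDeltaLike G₁) (a : V₁) :
    Odd ((D).neighborSet (.inl a)).ncard := by
  have hodd := hG₁.odd_ncard_neighborSet a
  obtain rfl | ha := eq_or_ne a v₁
  · have hfin : (G₁.neighborSet a).Finite := finite_of_ncard_ne_zero hodd.pos.ne'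
    rw [neighborSet_inl_root, ncard_insert_of_notMem (by simp) ((hfin.image _).insert _),
      ncard_insert_of_notMem (by simp) (hfin.image _), ncard_image_of_injective _ Sum.inl_injective]
    exact hodd.add_even even_two
  · rwa [neighborSet_inl_of_ne ha, ncard_image_of_injective _ Sum.inl_injective]

lemma ncard_neighborSet_inl_lt_two (hG₁ : IsDeltaLike G₁) {a : V₁}
    (h : IsSimplicial D (.inl a)) : ((D).neighborSet (.inl a)).ncard < 2 := by
  obtain rfl | ha := eq_or_ne a v₁
  · obtain ⟨x, hx⟩ := nonempty_of_ncard_ne_zero (hG₁.odd_ncard_neighborSet a).pos.ne'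
    exact absurd (h (.inl x) (.inr (.inl v₂)) hx ⟨rfl, rfl⟩ (by simp)).1 (G₁.ne_of_adj hx).symm
  · rw [neighborSet_inl_of_ne ha, ncard_image_of_injective _ Sum.inl_injective]
    exact hG₁.ncard_neighborSet_lt_two (h.of_embedding embLeft)

lemma _root_.IsDeltaLike.deltaComp (h₁ : IsDeltaLike G₁) (h₂ : IsDeltaLike G₂)
    (h₃ : IsDeltaLike G₃) : IsDeltaLike D where
  odd_ncard_neighborSet
    | .inl a => odd_ncard_neighborSet_inl h₁ a
    | .inr (.inl b) => by
      rw [← rotate.ncard_neighborSet]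
      exact odd_ncard_neighborSet_inl h₂ b
    | .inr (.inr c) => by
      rw [← rotate.symm.ncard_neighborSet]
      exact odd_ncard_neighborSet_inl h₃ c
  isEdgeOrTriangle_of_isBlock {S} hS := by
    rcases subset_part_or_subset_triangle hS.1 with h | h | h | h
    · exact h₁.isEdgeOrTriangle_of_subset_range embLeft hS h
    · exact h₂.isEdgeOrTriangle_of_subset_range embMid hS h
    · exact h₃.isEdgeOrTriangle_of_subset_range embRight hS h
    · rw [hS.2 _ h (isClique_triangle.isBiconnectedSet (insert_nonempty _ _))]
      exact ⟨isClique_triangle, .inr (ncard_eq_three.mpr ⟨_, _, _, by simp, by simp, by simp, rfl⟩)⟩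
  ncard_neighborSet_lt_two {x} hx := by
    rcases x with a | b | c
    · exact ncard_neighborSet_inl_lt_two h₁ hx
    · rw [← rotate.ncard_neighborSet]
      exact ncard_neighborSet_inl_lt_two h₂ (hx.of_embedding rotate.symm.toEmbedding)
    · rw [← rotate.symm.ncard_neighborSet]
      exact ncard_neighborSet_inl_lt_two h₃ (hx.of_embedding rotate.toEmbedding)

end deltaComp

lemma InDelta.isDeltaLike {k : ℕ} {V : Type} {G : SimpleGraph V} (hG : InDelta k G) :
    IsDeltaLike G := by
  induction hG with
  | base G e => exact IsDeltaLike.top_fin_two.of_iso e.some.symm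
  | comp G v₁ v₂ v₃ _ _ _ e ih₁ ih₂ ih₃ => exact (ih₁.deltaComp ih₂ ih₃).of_iso e.some.symm

theorem delta_blockGraph_general {V : Type} [Fintype V]
    (k : ℕ) (G : SimpleGraph V) [DecidableRel G.Adj] (hG : InDelta k G) :
    IsBlockGraph G ∧
      (∀ v : V, Odd (G.degree v)) ∧
      (∀ S : Set V, IsBlock G S →
        Nonempty (G.induce S ≃g (⊤ : SimpleGraph (Fin 2))) ∨
        Nonempty (G.induce S ≃g (⊤ : SimpleGraph (Fin 3)))) ∧
      (∀ v : V, IsSimplicial G v → G.degree v < 2) := by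
  have hΔ := hG.isDeltaLike
  have hdeg (v : V) : G.degree v = (G.neighborSet v).ncard := by
    rw [← card_neighborSet_eq_degree, ← Nat.card_eq_fintype_card, Nat.card_coe_set_eq]
  refine ⟨fun S hS => (hΔ.isEdgeOrTriangle_of_isBlock hS).1,
    fun v => hdeg v ▸ hΔ.odd_ncard_neighborSet v, fun S hS => ?_,
    fun v hv => hdeg v ▸ hΔ.ncard_neighborSet_lt_two hv⟩
  obtain ⟨hclique, hcard | hcard⟩ := hΔ.isEdgeOrTriangle_of_isBlock hS
  · exact .inl (hclique.nonempty_induce_iso_top hcard two_ne_zero)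
  · exact .inr (hclique.nonempty_induce_iso_top hcard three_ne_zero)

theorem delta_blockGraph {V : Type} [Fintype V] [DecidableEq V]
    (k : ℕ) (G : SimpleGraph V) [DecidableRel G.Adj] (hG : InDelta k G) :
    IsBlockGraph G ∧
      (∀ v : V, Odd (G.degree v)) ∧
      (∀ S : Set V, IsBlock G S →
        Nonempty (G.induce S ≃g (⊤ : SimpleGraph (Fin 2))) ∨
        Nonempty (G.induce S ≃g (⊤ : SimpleGraph (Fin 3)))) ∧
      (∀ v : V, IsSimplicial G v → G.degree v < 2) :=
  delta_blockGraph_general k G hG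
end
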